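/- The Moser map M restricted to the unit cotangent bundle T₁*S³ minus the north-pole fiber is a bijection onto the set K₊⁻¹(0) = {(q,p) : |q|(|p|²+1)=2, q≠0}, with inverse M⁻¹(q,p) = (x,y) where x = ((|p|²−1)/(|p|²+1), 2p/(|p|²+1)) and y = (−⟨q,p⟩, −((|p|²+1)/2)q + ⟨q,p⟩p). -/

import Mathlib

open scoped RealInnerProductSpace

noncomputable section

abbrev E3 := EuclideanSpace ℝ (Fin 3)
abbrev E4 := EuclideanSpace ℝ (Fin 4)

def tl (x : E4) : E3 := WithLp.toLp 2 (fun i => x i.succ)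

/-- Build a vector of ℝ⁴ from its time and space components. -/
def mk4 (r : ℝ) (v : E3) : E4 := WithLp.toLp 2 (fun i => Fin.cases r (fun j => v j) i)

/-- The Moser map M(x,y) = (q,p). -/
def moserMap (xy : E4 × E4) : E3 × E3 :=
  (-((1 - xy.1 0) • tl xy.2) - (xy.2 0) • tl xy.1, (1 - xy.1 0)⁻¹ • tl xy.1)

/-- The claimed inverse of the Moser map. -/
def moserInv (qp : E3 × E3) : E4 × E4 :=
  (mk4 ((‖qp.2‖ ^ 2 - 1) / (‖qp.2‖ ^ 2 + 1)) ((2 / (‖qp.2‖ ^ 2 + 1)) • qp.2),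
   mk4 (-⟪qp.1, qp.2⟫) (-(((‖qp.2‖ ^ 2 + 1) / 2) • qp.1) + ⟪qp.1, qp.2⟫ • qp.2))

/-- T₁*S³ minus the north-pole fiber. -/
def unitCotangentS3 : Set (E4 × E4) :=
  {xy | ‖xy.1‖ = 1 ∧ ‖xy.2‖ = 1 ∧ ⟪xy.1, xy.2⟫ = 0 ∧ xy.1 0 ≠ 1}

/-- K₊⁻¹(0) = {(q,p) : |q|(|p|²+1) = 2, q ≠ 0}. -/
def KplusZero : Set (E3 × E3) :=
  {qp | qp.1 ≠ 0 ∧ ‖qp.1‖ * (‖qp.2‖ ^ 2 + 1) = 2}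

@[simp] lemma tl0 (x : E4) : tl x 0 = x 1 := rfl
@[simp] lemma tl1 (x : E4) : tl x 1 = x 2 := rfl
@[simp] lemma tl2 (x : E4) : tl x 2 = x 3 := rfl
@[simp] lemma mk4_0 (r : ℝ) (v : E3) : mk4 r v 0 = r := rfl
@[simp] lemma mk4_1 (r : ℝ) (v : E3) : mk4 r v 1 = v 0 := rfl
@[simp] lemma mk4_2 (r : ℝ) (v : E3) : mk4 r v 2 = v 1 := rfl
@[simp] lemma mk4_3 (r : ℝ) (v : E3) : mk4 r v 3 = v 2 := rfl
@[simp] lemma tl_mk4 (r : ℝ) (v : E3) : tl (mk4 r v) = v := rfl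

lemma e3_ext (v w : E3) (h0 : v 0 = w 0) (h1 : v 1 = w 1) (h2 : v 2 = w 2) : v = w := by
  ext i; fin_cases i <;> assumption

lemma mk4_eq {r : ℝ} {v : E3} {x : E4} (h1 : r = x 0) (h2 : v = tl x) : mk4 r v = x := by
  subst h1; subst h2
  ext i
  refine Fin.cases rfl (fun j => rfl) i

lemma inner_e4 (x y : E4) : ⟪x,y⟫ = x 0*y 0 + x 1*y 1 + x 2*y 2 + x 3*y 3 := by
  simp [PiLp.inner_apply, Fin.sum_univ_four, RCLike.inner_apply, conj_trivial]
  ring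
lemma norm_sq_e4 (x : E4) : ‖x‖^2 = x 0^2 + x 1^2 + x 2^2 + x 3^2 := by
  rw [← real_inner_self_eq_norm_sq, inner_e4]; ring
lemma inner_e3 (x y : E3) : ⟪x,y⟫ = x 0*y 0 + x 1*y 1 + x 2*y 2 := by
  simp [PiLp.inner_apply, Fin.sum_univ_three, RCLike.inner_apply, conj_trivial]
  ring
lemma norm_sq_e3 (x : E3) : ‖x‖^2 = x 0^2 + x 1^2 + x 2^2 := by
  rw [← real_inner_self_eq_norm_sq, inner_e3]; ring

section fwd
variable {x y : E4}

lemma aux_facts (hx : ‖x‖ = 1) (hy : ‖y‖ = 1) (hxy : ⟪x,y⟫ = 0) (hx0 : x 0 ≠ 1) :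
    0 < 1 - x 0 ∧
    ‖-((1 - x 0) • tl y) - (y 0) • tl x‖ = 1 - x 0 ∧
    ‖(1 - x 0)⁻¹ • tl x‖^2 = (1 + x 0)/(1 - x 0) ∧
    ⟪-((1 - x 0) • tl y) - (y 0) • tl x, (1 - x 0)⁻¹ • tl x⟫ = -(y 0) := by
  have hx2 : x 0^2 + x 1^2 + x 2^2 + x 3^2 = 1 := by rw [← norm_sq_e4, hx]; norm_num
  have hy2 : y 0^2 + y 1^2 + y 2^2 + y 3^2 = 1 := by rw [← norm_sq_e4, hy]; norm_num
  have hxy' : x 0*y 0 + x 1*y 1 + x 2*y 2 + x 3*y 3 = 0 := by rw [← inner_e4]; exact hxy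
  have hpos : 0 < 1 - x 0 := by
    have hle : x 0 ≤ 1 := by nlinarith [sq_nonneg (x 1), sq_nonneg (x 2), sq_nonneg (x 3)]
    have : x 0 < 1 := lt_of_le_of_ne hle hx0
    linarith
  have hne : (1 : ℝ) - x 0 ≠ 0 := ne_of_gt hpos
  refine ⟨hpos, ?_, ?_, ?_⟩
  · have h2 : ‖-((1 - x 0) • tl y) - (y 0) • tl x‖^2 = (1 - x 0)^2 := by
      rw [norm_sq_e3]
      simp only [PiLp.sub_apply, PiLp.neg_apply, PiLp.smul_apply, smul_eq_mul, tl0, tl1, tl2]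
      linear_combination ((1 - x 0)^2) * hy2 + (2*(1 - x 0)*(y 0)) * hxy' + ((y 0)^2) * hx2
    nlinarith [norm_nonneg (-((1 - x 0) • tl y) - (y 0) • tl x), hpos]
  · rw [norm_sq_e3]
    simp only [PiLp.smul_apply, smul_eq_mul, tl0, tl1, tl2]
    field_simp
    linear_combination hx2
  · rw [inner_e3]
    simp only [PiLp.sub_apply, PiLp.neg_apply, PiLp.smul_apply, smul_eq_mul, tl0, tl1, tl2]
    field_simp
    linear_combination (x 0 - 1) * hxy' + (-(y 0)) * hx2
end fwd

lemma mto1 : Set.MapsTo moserMap unitCotangentS3 KplusZero := by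
  rintro ⟨x, y⟩ ⟨hx, hy, hxy, hx0⟩
  obtain ⟨hpos, hqn, hp2, hip⟩ := aux_facts hx hy hxy hx0
  have hne : (1 : ℝ) - x 0 ≠ 0 := ne_of_gt hpos
  simp only [KplusZero, Set.mem_setOf_eq, moserMap]
  refine ⟨?_, ?_⟩
  · rw [← norm_pos_iff, hqn]; exact hpos
  · rw [hqn, hp2]
    field_simp
    ring

set_option maxHeartbeats 1000000 in
lemma mto2 : Set.MapsTo moserInv KplusZero unitCotangentS3 := by
  rintro ⟨q, p⟩ ⟨hq0, hK⟩
  have hP1 : (0:ℝ) < ‖p‖^2 + 1 := by positivity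
  have hQ4 : ‖q‖^2 * (‖p‖^2 + 1)^2 = 4 := by
    have h := congrArg (·^2) hK
    simp only at h
    linear_combination h
  have hP : ‖p‖^2 = p 0^2 + p 1^2 + p 2^2 := norm_sq_e3 p
  have hQ : ‖q‖^2 = q 0^2 + q 1^2 + q 2^2 := norm_sq_e3 q
  have hip : ⟪q,p⟫ = q 0*p 0 + q 1*p 1 + q 2*p 2 := inner_e3 q p
  have hP1' : (p 0^2 + p 1^2 + p 2^2 : ℝ) + 1 ≠ 0 := by rw [← hP]; exact ne_of_gt hP1
  have hQ4' : (q 0^2 + q 1^2 + q 2^2) * ((p 0^2 + p 1^2 + p 2^2) + 1)^2 = 4 := by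
    rw [← hP, ← hQ]; exact hQ4
  simp only [unitCotangentS3, Set.mem_setOf_eq]
  refine ⟨?_, ?_, ?_, ?_⟩
  · have h2 : ‖(moserInv (q,p)).1‖^2 = 1 := by
      rw [norm_sq_e4]
      simp only [moserInv, mk4_0, mk4_1, mk4_2, mk4_3, PiLp.smul_apply, smul_eq_mul]
      rw [hP]
      field_simp
      ring
    have := norm_nonneg (moserInv (q,p)).1
    nlinarith
  · have h2 : ‖(moserInv (q,p)).2‖^2 = 1 := by
      rw [norm_sq_e4]
      simp only [moserInv, mk4_0, mk4_1, mk4_2, mk4_3, PiLp.add_apply, PiLp.neg_apply,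
        PiLp.smul_apply, smul_eq_mul]
      rw [hP, hip]
      linear_combination (1/4) * hQ4'
    have := norm_nonneg (moserInv (q,p)).2
    nlinarith
  · rw [inner_e4]
    simp only [moserInv, mk4_0, mk4_1, mk4_2, mk4_3, PiLp.add_apply, PiLp.neg_apply,
      PiLp.smul_apply, smul_eq_mul]
    rw [hP, hip]
    field_simp
    ring
  · simp only [moserInv, mk4_0]
    intro h
    rw [div_eq_one_iff_eq (ne_of_gt hP1)] at h
    linarith

set_option maxHeartbeats 1000000 in
lemma linv : ∀ xy ∈ unitCotangentS3, moserInv (moserMap xy) = xy := by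
  rintro ⟨x, y⟩ ⟨hx, hy, hxy, hx0⟩
  obtain ⟨hpos, hqn, hp2, hip⟩ := aux_facts hx hy hxy hx0
  have hne : (1 : ℝ) - x 0 ≠ 0 := ne_of_gt hpos
  simp only [moserMap, moserInv]
  rw [hp2, hip]
  refine Prod.ext (mk4_eq ?_ (e3_ext _ _ ?_ ?_ ?_)) (mk4_eq ?_ (e3_ext _ _ ?_ ?_ ?_))
  · field_simp; ring
  · simp only [PiLp.smul_apply, smul_eq_mul, tl0]; field_simp; ring
  · simp only [PiLp.smul_apply, smul_eq_mul, tl1]; field_simp; ring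
  · simp only [PiLp.smul_apply, smul_eq_mul, tl2]; field_simp; ring
  · ring
  · simp only [PiLp.add_apply, PiLp.neg_apply, PiLp.sub_apply, PiLp.smul_apply,
      smul_eq_mul, tl0]; field_simp; ring
  · simp only [PiLp.add_apply, PiLp.neg_apply, PiLp.sub_apply, PiLp.smul_apply,
      smul_eq_mul, tl1]; field_simp; ring
  · simp only [PiLp.add_apply, PiLp.neg_apply, PiLp.sub_apply, PiLp.smul_apply,
      smul_eq_mul, tl2]; field_simp; ring

set_option maxHeartbeats 1000000 in
lemma rinv : ∀ qp ∈ KplusZero, moserMap (moserInv qp) = qp := by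
  rintro ⟨q, p⟩ ⟨hq0, hK⟩
  have hP1 : (0:ℝ) < ‖p‖^2 + 1 := by positivity
  have hP1' : (‖p‖^2 + 1 : ℝ) ≠ 0 := ne_of_gt hP1
  have h1x : 1 - (‖p‖^2 - 1)/(‖p‖^2 + 1) = 2/(‖p‖^2 + 1) := by
    field_simp
    ring
  simp only [moserMap, moserInv, tl_mk4, mk4_0]
  rw [h1x]
  refine Prod.ext (e3_ext _ _ ?_ ?_ ?_) (e3_ext _ _ ?_ ?_ ?_) <;>
    simp only [PiLp.add_apply, PiLp.neg_apply, PiLp.sub_apply, PiLp.smul_apply,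
      smul_eq_mul] <;>
    field_simp <;> ring

theorem moser_bijection :
    Set.BijOn moserMap unitCotangentS3 KplusZero ∧
    (∀ xy ∈ unitCotangentS3, moserInv (moserMap xy) = xy) ∧
    (∀ qp ∈ KplusZero, moserMap (moserInv qp) = qp) := by
  exact ⟨Set.InvOn.bijOn ⟨linv, rinv⟩ mto1 mto2, linv, rinv⟩

end
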